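/- For any r ∈ [n+1] and any partition {U_1, U_2} of [n+2] \ {r, r+1}, the quantity T^c of the three-tier complete tiered graph CT(U_1, {r}, U_2) satisfies T^c_{CT(U_1,{r},U_2)}(y) = T^c_{CT(U_1∪{r}, U_2∪{r+1})}(y) − T^c_{CT(U_1∪{r+1}, U_2∪{r})}(y), where T^c_G(y) = T_G(1, y) if G is connected and 0 otherwise. -/

import Mathlib

open Finset

attribute [local instance 10] Classical.propDecidable

noncomputable section

/-- An edge of a simple graph on `ℕ`, stored as an ordered pair `(u,v)` with `u < v` intended. -/
abbrev PEdge : Type := ℕ × ℕ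

/-- A labelled edge (for multigraphs): an endpoint pair together with a label. -/
abbrev LEdge : Type := (ℕ × ℕ) × ℕ

def adjP (E : Finset PEdge) (u v : ℕ) : Prop := (u, v) ∈ E ∨ (v, u) ∈ E

def reachP (E : Finset PEdge) : ℕ → ℕ → Prop := Relation.ReflTransGen (adjP E)

def connP (V : Finset ℕ) (E : Finset PEdge) : Prop :=
  (∀ e ∈ E, e.1 ∈ V ∧ e.2 ∈ V) ∧ ∀ u ∈ V, ∀ v ∈ V, reachP E u v

def IsTreeOn (V : Finset ℕ) (E : Finset PEdge) : Prop := connP V E ∧ E.card + 1 = V.card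

/-- A graph on a finite set of naturals together with a tiering map. -/
structure PreGraph where
  V : Finset ℕ
  E : Finset PEdge
  t : ℕ → ℕ

/-- `G` is a tiered graph with two tiers. -/
def IsTiered (G : PreGraph) : Prop :=
  (∀ v ∈ G.V, 0 < v) ∧
  (∀ e ∈ G.E, e.1 ∈ G.V ∧ e.2 ∈ G.V ∧ e.1 < e.2) ∧
  (∀ v ∈ G.V, G.t v = 1 ∨ G.t v = 2) ∧
  (∀ e ∈ G.E, G.t e.1 < G.t e.2)

/-- acyclicity: every edge is a bridge. -/
def IsForest (G : PreGraph) : Prop := ∀ e ∈ G.E, ¬ reachP (G.E.erase e) e.1 e.2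

def IsTreeG (G : PreGraph) : Prop := IsTreeOn G.V G.E

/-- the connected component (vertex set) of `x`. -/
def comp (V : Finset ℕ) (E : Finset PEdge) (x : ℕ) : Finset ℕ :=
  V.filter fun y => reachP E x y

/-- the order-reversing involution `x_i ↦ x_{s+1-i}` of a finite set `V = {x_1 < ... < x_s}`. -/
def flipMap (V : Finset ℕ) (x : ℕ) : ℕ :=
  if hx : x ∈ V then
    ((V.orderIsoOfFin rfl)
      ⟨V.card - 1 - ((V.orderIsoOfFin rfl).symm ⟨x, hx⟩).1, by
        have h := ((V.orderIsoOfFin rfl).symm ⟨x, hx⟩).isLt; omega⟩).1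
  else x

/-- the dual of a (connected) tiered graph, via the global vertex ordering. -/
def dual (G : PreGraph) : PreGraph where
  V := G.V
  E := G.E.image fun e => (flipMap G.V e.2, flipMap G.V e.1)
  t := fun x => if x ∈ G.V then 3 - G.t (flipMap G.V x) else G.t x

/-- the componentwise dual of a (possibly disconnected) tiered graph. -/
def cdual (G : PreGraph) : PreGraph where
  V := G.V
  E := G.E.image fun e => (flipMap (comp G.V G.E e.1) e.2, flipMap (comp G.V G.E e.1) e.1)
  t := fun x => if x ∈ G.V then 3 - G.t (flipMap (comp G.V G.E x) x) else G.t x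

/-- the recursive weight of a tiered tree (fuel-based implementation; the recursion
depth is bounded by the number of vertices). -/
def weightAux : ℕ → PreGraph → ℕ
  | 0, _ => 0
  | fuel + 1, T =>
    if h : 2 ≤ T.V.card then
      let v := T.V.min' (Finset.card_pos.mp (by omega))
      let V' := T.V.erase v
      let E' := T.E.filter fun e => e.1 ≠ v ∧ e.2 ≠ v
      ∑ u ∈ V'.filter (fun u => adjP T.E v u),
        (((comp V' E' u).filter fun y => y < u ∧ T.t v < T.t y).card
          + weightAux fuel ⟨comp V' E' u, E'.filter fun e => e.1 ∈ comp V' E' u, T.t⟩)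
    else 0

def weight (T : PreGraph) : ℕ := weightAux T.V.card T

/-- edges of a complete tiered graph with tier 1 vertex set `A` and tier 2 vertex set `B`. -/
def ctE2 (A B : Finset ℕ) : Finset PEdge := (A ×ˢ B).filter fun e => e.1 < e.2

/-- the edge set of the complete tiered graph determined by a two-tier tiered graph `G`. -/
def ctE (G : PreGraph) : Finset PEdge :=
  ctE2 (G.V.filter fun v => G.t v = 1) (G.V.filter fun v => G.t v = 2)

/-- edge set of the complete tiered graph on `[n]` determined by a tiering map `t`. -/
def ctEM (n : ℕ) (t : ℕ → ℕ) : Finset PEdge :=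
  (Finset.Icc 1 n ×ˢ Finset.Icc 1 n).filter fun e => e.1 < e.2 ∧ t e.1 < t e.2

def extActiveP (T : Finset PEdge) (ω : PEdge → ℝ) (e : PEdge) : Prop :=
  e ∉ T ∧ reachP T e.1 e.2 ∧ ∀ e' ∈ T, ¬ reachP (T.erase e') e.1 e.2 → ω e < ω e'

/-- external activity of the spanning forest `T` in the graph with edge set `E`. -/
def eaP (E T : Finset PEdge) (ω : PEdge → ℝ) : ℕ := (E.filter (extActiveP T ω)).card

def adjL (E : Finset LEdge) (u v : ℕ) : Prop := ∃ e ∈ E, e.1 = (u, v) ∨ e.1 = (v, u)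
def reachL (E : Finset LEdge) : ℕ → ℕ → Prop := Relation.ReflTransGen (adjL E)
def connL (V : Finset ℕ) (E : Finset LEdge) : Prop := ∀ u ∈ V, ∀ v ∈ V, reachL E u v
def IsLTree (V : Finset ℕ) (T : Finset LEdge) : Prop := connL V T ∧ T.card + 1 = V.card

def extActiveL (T : Finset LEdge) (ω : LEdge → ℝ) (e : LEdge) : Prop :=
  e ∉ T ∧ reachL T e.1.1 e.1.2 ∧ ∀ e' ∈ T, ¬ reachL (T.erase e') e.1.1 e.1.2 → ω e < ω e'

def eaL (E T : Finset LEdge) (ω : LEdge → ℝ) : ℕ := (E.filter (extActiveL T ω)).card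

def omega1 (N : ℕ) (e : PEdge) : ℝ := (e.1 : ℝ) + (e.2 : ℝ) / (N : ℝ)
def omega2 (N : ℕ) (e : PEdge) : ℝ := ((N + 1 - e.2 : ℕ) : ℝ) + ((N + 1 - e.1 : ℕ) : ℝ) / (N : ℝ)
def omegaLex (n : ℕ) (e : PEdge) : ℝ := ((e.1 * (n + 1) + e.2 : ℕ) : ℝ)

/-- representative (minimum) of the component of `x` in the forest `F` on vertex set `V`. -/
def rep (V : Finset ℕ) (F : Finset LEdge) (x : ℕ) : ℕ :=
  if hx : x ∈ V then
    (V.filter fun y => reachL F x y).min'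
      ⟨x, Finset.mem_filter.mpr ⟨hx, Relation.ReflTransGen.refl⟩⟩
  else x

/-- image of an edge in the quotient graph `G • F`; the label encodes the original edge. -/
def quotEdge (ρ : ℕ → ℕ) (e : LEdge) : LEdge :=
  ((ρ e.1.1, ρ e.1.2), Nat.pair (Nat.pair e.1.1 e.1.2) e.2)

/-- recover the original edge from a quotient edge. -/
def decodeE (e : LEdge) : LEdge :=
  (((Nat.unpair (Nat.unpair e.2).1).1, (Nat.unpair (Nat.unpair e.2).1).2), (Nat.unpair e.2).2)

/-- tiering map on `[n]` induced by `f : Fin n → Fin m` (tiers `1,...,m`). -/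
def tf (n m : ℕ) (f : Fin n → Fin m) : ℕ → ℕ := fun v =>
  if h : v ∈ Finset.Icc 1 n then
    (f ⟨v - 1, by have := Finset.mem_Icc.mp h; omega⟩).1 + 1
  else 0

/-- `G` is a tiered graph with `m` tiers. -/
def IsTieredM (m : ℕ) (G : PreGraph) : Prop :=
  (∀ e ∈ G.E, e.1 ∈ G.V ∧ e.2 ∈ G.V ∧ e.1 < e.2) ∧
  (∀ v ∈ G.V, G.t v ∈ Finset.Icc 1 m) ∧
  (∀ e ∈ G.E, G.t e.1 < G.t e.2) ∧
  (∀ i ∈ Finset.Icc 1 m, ∃ v ∈ G.V, G.t v = i)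

/-- weight polynomial `P_p(q)` (recursive weight), evaluated at `q`. -/
def Pw (n m : ℕ) (p : ℕ → ℕ) (q : ℤ) : ℤ :=
  ∑ f : Fin n → Fin m,
    ∑ E ∈ ((Finset.Icc 1 n ×ˢ Finset.Icc 1 n).powerset.filter fun E =>
        IsTreeG ⟨Finset.Icc 1 n, E, tf n m f⟩ ∧ IsTieredM m ⟨Finset.Icc 1 n, E, tf n m f⟩ ∧
        ∀ i ∈ Finset.Icc 1 m, ((Finset.Icc 1 n).filter fun v => tf n m f v = i).card = p i),
      q ^ weight ⟨Finset.Icc 1 n, E, tf n m f⟩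

/-- weight polynomial `P_p(q)` with the weight of a tiered tree given by its external
activity in the complete tiered graph it determines (lexicographic edge order). -/
def PwEA (n m : ℕ) (p : ℕ → ℕ) (q : ℤ) : ℤ :=
  ∑ f : Fin n → Fin m,
    ∑ E ∈ ((Finset.Icc 1 n ×ˢ Finset.Icc 1 n).powerset.filter fun E =>
        IsTreeG ⟨Finset.Icc 1 n, E, tf n m f⟩ ∧ IsTieredM m ⟨Finset.Icc 1 n, E, tf n m f⟩ ∧
        ∀ i ∈ Finset.Icc 1 m, ((Finset.Icc 1 n).filter fun v => tf n m f v = i).card = p i),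
      q ^ eaP (ctEM n (tf n m f)) E (omegaLex n)

/-- `T^c_G(y)`: the Tutte evaluation `T_G(1,y)` (spanning tree expansion) for a connected
graph, `0` otherwise. -/
def TcP (V : Finset ℕ) (E : Finset PEdge) (ω : PEdge → ℝ) (y : ℤ) : ℤ :=
  if connP V E then ∑ T ∈ E.powerset.filter (fun T => IsTreeOn V T), y ^ eaP E T ω else 0

/-- edge multiset of `H ∪ Q_S`: `H`-edges (labels `≠ 0`) together with the complete
tiered graph on `U` with tier-1 set `S` (labelled `0`). -/
def qE (U : Finset ℕ) (EH : Finset LEdge) (S : Finset ℕ) : Finset LEdge :=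
  EH ∪ (ctE2 S (U \ S)).image fun p => (p, 0)

/-- `(S,T) ↦ (S*, T*)`: the dual quasi-tiered tree. -/
def dualTree (U : Finset ℕ) (ST : Finset ℕ × Finset LEdge) : Finset ℕ × Finset LEdge :=
  (U.filter fun v =>
      (cdual ⟨U, (ST.2.filter fun e => e.2 = 0).image Prod.fst,
        fun w => if w ∈ ST.1 then 1 else 2⟩).t v = 1,
   (ST.2.filter fun e => e.2 ≠ 0) ∪
     (cdual ⟨U, (ST.2.filter fun e => e.2 = 0).image Prod.fst,
        fun w => if w ∈ ST.1 then 1 else 2⟩).E.image fun p => (p, 0))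

/-- tiered forests on `U` with tier sizes `(p1, p2)` (tier map normalised off `U`). -/
def ForestSet (U : Finset ℕ) (p1 p2 : ℕ) : Set PreGraph :=
  {F | F.V = U ∧ IsTiered F ∧ IsForest F ∧
    (U.filter fun v => F.t v = 1).card = p1 ∧
    (U.filter fun v => F.t v = 2).card = p2 ∧
    ∀ v, v ∉ U → F.t v = 0}

/-!
The subgraph expansion `T_G(1, y) = ∑ (y - 1) ^ (|A| - |V| + 1)`, over the connected
spanning subgraphs `A` of `G`, comes from grouping these subgraphs by their maximum-weight
spanning tree `T`: the fibre over `T` consists of the `T ∪ S` with `S` a set of edges externally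
active for `T`. The subgraph expansion satisfies deletion–contraction. In
`CT(U1 ∪ {r}, U2 ∪ {r + 1})`, deleting the edge `(r, r + 1)` gives
`CT(U1 ∪ {r + 1}, U2 ∪ {r})` after swapping `r` and `r + 1`, and contracting it gives
`CT(U1, {r}, U2)`.
-/

namespace reachP

variable {E F : Finset PEdge} {u v w : ℕ}

theorem refl (E : Finset PEdge) (u : ℕ) : reachP E u u := Relation.ReflTransGen.refl

theorem trans (h : reachP E u v) (h' : reachP E v w) : reachP E u w :=
  Relation.ReflTransGen.trans h h'

theorem symm (h : reachP E u v) : reachP E v u := by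
  induction h with
  | refl => exact refl E _
  | tail _ hadj ih => exact trans (Relation.ReflTransGen.single (Or.symm hadj : adjP E _ _)) ih

theorem of_mem {e : PEdge} (he : e ∈ E) : reachP E e.1 e.2 :=
  Relation.ReflTransGen.single (Or.inl he)

theorem map (f : ℕ → ℕ) (hE : ∀ g ∈ E, reachP F (f g.1) (f g.2)) (h : reachP E u v) :
    reachP F (f u) (f v) := by
  induction h with
  | refl => exact refl F _
  | tail _ hadj ih =>
    rcases hadj with hg | hg
    · exact ih.trans (hE _ hg)
    · exact ih.trans (hE _ hg).symm

theorem lift (hE : ∀ g ∈ E, reachP F g.1 g.2) (h : reachP E u v) : reachP F u v :=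
  map id hE h

theorem mono (hEF : E ⊆ F) (h : reachP E u v) : reachP F u v :=
  h.lift fun _ hg => of_mem (hEF hg)

theorem eq_of_empty (h : reachP ∅ u v) : u = v := by
  induction h with
  | refl => rfl
  | tail _ hadj => simp [adjP] at hadj

theorem erase_or {e : PEdge} (h : reachP E u v) :
    reachP (E.erase e) u v ∨
      (reachP (E.erase e) u e.1 ∧ reachP (E.erase e) e.2 v) ∨
      (reachP (E.erase e) u e.2 ∧ reachP (E.erase e) e.1 v) := by
  induction h with
  | refl => exact Or.inl (refl _ _)
  | @tail b c _ hbc ih =>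
    by_cases hbc' : adjP (E.erase e) b c
    · have step : reachP (E.erase e) b c := Relation.ReflTransGen.single hbc'
      rcases ih with h | ⟨h, h'⟩ | ⟨h, h'⟩
      · exact Or.inl (h.trans step)
      · exact Or.inr (Or.inl ⟨h, h'.trans step⟩)
      · exact Or.inr (Or.inr ⟨h, h'.trans step⟩)
    · have he : (b, c) = e ∨ (c, b) = e := by
        simp only [adjP, mem_erase, ne_eq] at hbc hbc'
        tauto
      rcases he with rfl | rfl <;> rcases ih with h | ⟨h, h'⟩ | ⟨h, h'⟩
      all_goals first
        | exact Or.inl h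
        | exact Or.inr (Or.inl ⟨h, refl _ _⟩)
        | exact Or.inr (Or.inr ⟨h, refl _ _⟩)

theorem insert_erase_of_not_erase {e m : PEdge} (h : reachP E e.1 e.2)
    (hm : ¬ reachP (E.erase m) e.1 e.2) : reachP (insert e (E.erase m)) m.1 m.2 := by
  have hsub : E.erase m ⊆ insert e (E.erase m) := subset_insert _ _
  have he : reachP (insert e (E.erase m)) e.1 e.2 := of_mem (mem_insert_self _ _)
  rcases h.erase_or (e := m) with h | ⟨h, h'⟩ | ⟨h, h'⟩
  · exact absurd h hm
  · exact ((h.mono hsub).symm.trans he).trans (h'.mono hsub).symm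
  · exact ((h'.mono hsub).trans he.symm).trans (h.mono hsub)

end reachP

def IsAcyclicP (E : Finset PEdge) : Prop := ∀ e ∈ E, ¬ reachP (E.erase e) e.1 e.2

theorem IsAcyclicP.mono {E F : Finset PEdge} (hFE : F ⊆ E) (hE : IsAcyclicP E) :
    IsAcyclicP F := fun g hg h =>
  hE g (hFE hg) (h.mono fun _ hx => mem_erase.2 ⟨(mem_erase.1 hx).1, hFE (mem_erase.1 hx).2⟩)

theorem connP.erase {V : Finset ℕ} {E : Finset PEdge} {e : PEdge} (hc : connP V E)
    (hd : reachP (E.erase e) e.1 e.2) : connP V (E.erase e) := by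
  refine ⟨fun g hg => hc.1 g (mem_of_mem_erase hg), fun u hu v hv => ?_⟩
  rcases (hc.2 u hu v hv).erase_or (e := e) with h | ⟨h, h'⟩ | ⟨h, h'⟩
  · exact h
  · exact (h.trans hd).trans h'
  · exact (h.trans hd.symm).trans h'

theorem connP_component {V : Finset ℕ} {E : Finset PEdge}
    (hEV : ∀ g ∈ E, g.1 ∈ V ∧ g.2 ∈ V) (x : ℕ) :
    connP (V.filter (reachP E x)) (E.filter fun g => reachP E x g.1) := by
  set Ex := E.filter fun g => reachP E x g.1
  have hreach : ∀ u, reachP E x u → reachP Ex x u := by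
    intro u hu
    induction hu with
    | refl => exact reachP.refl _ _
    | @tail b c hxb hbc ih =>
      rcases hbc with h | h
      · exact ih.trans (reachP.of_mem (e := (b, c)) (mem_filter.2 ⟨h, hxb⟩))
      · exact ih.trans (reachP.of_mem (e := (c, b))
          (mem_filter.2 ⟨h, hxb.trans (reachP.of_mem h).symm⟩)).symm
  refine ⟨fun g hg => ?_, fun u hu v hv => ?_⟩
  · obtain ⟨hgE, hxg⟩ := mem_filter.1 hg
    exact ⟨mem_filter.2 ⟨(hEV g hgE).1, hxg⟩,
      mem_filter.2 ⟨(hEV g hgE).2, hxg.trans (reachP.of_mem hgE)⟩⟩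
  · exact (hreach u (mem_filter.1 hu).2).symm.trans (hreach v (mem_filter.1 hv).2)

/-- Removing an edge `e` of a connected acyclic graph leaves the two components of `e.1` and
`e.2`; induct on both. -/
theorem IsAcyclicP.card_add_one {V : Finset ℕ} {E : Finset PEdge} (hE : IsAcyclicP E)
    (hc : connP V E) (hV : V.Nonempty) : E.card + 1 = V.card := by
  induction hn : E.card using Nat.strong_induction_on generalizing V E with
  | _ n ih =>
  rcases E.eq_empty_or_nonempty with rfl | ⟨e, he⟩
  · obtain ⟨v, hv⟩ := hV
    have hVv : V = {v} :=
      eq_singleton_iff_unique_mem.2 ⟨hv, fun u hu => (hc.2 u hu v hv).eq_of_empty⟩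
    simp [hVv, ← hn]
  set E' := E.erase e
  have hEV' : ∀ g ∈ E', g.1 ∈ V ∧ g.2 ∈ V := fun g hg => hc.1 g (mem_of_mem_erase hg)
  have hside : ∀ v ∈ V, reachP E' e.2 v ↔ ¬ reachP E' e.1 v := by
    intro v hv
    refine ⟨fun h2 h1 => hE e he (h1.trans h2.symm), fun h1 => ?_⟩
    rcases (hc.2 e.1 (hc.1 e he).1 v hv).erase_or (e := e) with h | ⟨-, h⟩ | ⟨h, -⟩
    · exact absurd h h1
    · exact h
    · exact absurd h (hE e he)
  have hcomp : ∀ x ∈ V, (E'.filter fun g => reachP E' x g.1).card + 1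
      = (V.filter (reachP E' x)).card := fun x hx =>
    ih _ (lt_of_le_of_lt (card_filter_le _ _) (hn ▸ card_erase_lt_of_mem he))
      (hE.mono ((filter_subset _ _).trans (erase_subset _ _))) (connP_component hEV' x)
      ⟨x, mem_filter.2 ⟨hx, reachP.refl _ _⟩⟩ rfl
  have hVsplit : V.card = (V.filter (reachP E' e.1)).card + (V.filter (reachP E' e.2)).card := by
    rw [filter_congr hside, card_filter_add_card_filter_not]
  have hEsplit : E'.card = (E'.filter fun g => reachP E' e.1 g.1).card
      + (E'.filter fun g => reachP E' e.2 g.1).card := by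
    rw [filter_congr fun g hg => hside g.1 (hEV' g hg).1,
      card_filter_add_card_filter_not]
  have hE' : E'.card + 1 = n := by rw [← hn, card_erase_add_one he]
  have h1 := hcomp e.1 (hc.1 e he).1
  have h2 := hcomp e.2 (hc.1 e he).2
  omega

theorem exists_minimal_connector {E : Finset PEdge} {u v : ℕ} (h : reachP E u v) :
    ∃ S ⊆ E, reachP S u v ∧ ∀ g ∈ S, ¬ reachP (S.erase g) u v := by
  obtain ⟨S, hS, hmin⟩ := exists_min_image (E.powerset.filter (reachP · u v)) card
    ⟨E, mem_filter.2 ⟨mem_powerset_self E, h⟩⟩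
  obtain ⟨hSE, hSr⟩ := mem_filter.1 hS
  refine ⟨S, mem_powerset.1 hSE, hSr, fun g hg hr => ?_⟩
  have := hmin (S.erase g)
    (mem_filter.2 ⟨mem_powerset.2 ((erase_subset g S).trans (mem_powerset.1 hSE)), hr⟩)
  exact (card_erase_lt_of_mem hg).not_ge this

theorem IsAcyclicP.not_reachP_erase_of_minimal {T S : Finset PEdge} {u v : ℕ} {g : PEdge}
    (hT : IsAcyclicP T) (hST : S ⊆ T) (hSr : reachP S u v)
    (hmin : ∀ g ∈ S, ¬ reachP (S.erase g) u v) (hg : g ∈ S) : ¬ reachP (T.erase g) u v := by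
  intro hTr
  refine hT g (hST hg) ((reachP.insert_erase_of_not_erase (e := (u, v)) hSr (hmin g hg)).lift ?_)
  intro x hx
  rcases mem_insert.1 hx with rfl | hx
  · exact hTr
  · exact reachP.of_mem (mem_erase.2 ⟨(mem_erase.1 hx).1, hST (mem_erase.1 hx).2⟩)

/-- For injective `ω` this is the maximum-weight spanning forest found by Kruskal's algorithm. -/
def maxSpanningForest (A : Finset PEdge) (ω : PEdge → ℝ) : Finset PEdge :=
  A.filter fun e => ¬ reachP (A.filter fun g => ω e < ω g) e.1 e.2

section maxSpanningForest

variable {V : Finset ℕ} {A : Finset PEdge} {ω : PEdge → ℝ}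

theorem maxSpanningForest_subset : maxSpanningForest A ω ⊆ A := filter_subset _ _

theorem reachP_maxSpanningForest_filter_lt {e : PEdge}
    (hheavy : ∀ g ∈ A, ω e < ω g →
      reachP ((maxSpanningForest A ω).filter fun x => ω g ≤ ω x) g.1 g.2)
    (he : e ∈ A) (heF : e ∉ maxSpanningForest A ω) :
    reachP ((maxSpanningForest A ω).filter fun x => ω e < ω x) e.1 e.2 := by
  have hA : reachP (A.filter fun g => ω e < ω g) e.1 e.2 := by
    simpa [maxSpanningForest, he] using heF
  refine hA.lift fun g hg => ?_
  obtain ⟨hgA, hlt⟩ := mem_filter.1 hg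
  exact (hheavy g hgA hlt).mono
    (monotone_filter_right _ fun _ _ hx => hlt.trans_le hx)

theorem reachP_maxSpanningForest_filter_le {e : PEdge} (he : e ∈ A) :
    reachP ((maxSpanningForest A ω).filter fun x => ω e ≤ ω x) e.1 e.2 := by
  induction hn : (A.filter fun g => ω e < ω g).card using Nat.strong_induction_on
    generalizing e with
  | _ n ih =>
  by_cases heF : e ∈ maxSpanningForest A ω
  · exact reachP.of_mem (mem_filter.2 ⟨heF, le_rfl⟩)
  refine (reachP_maxSpanningForest_filter_lt (fun g hg hlt => ih _ ?_ hg rfl) he heF).mono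
    (monotone_filter_right _ fun _ _ => le_of_lt)
  rw [← hn]
  refine card_lt_card ⟨monotone_filter_right _ fun _ _ h => hlt.trans h, fun hsub => ?_⟩
  exact lt_irrefl _ (mem_filter.1 (hsub (mem_filter.2 ⟨hg, hlt⟩))).2

theorem connP.maxSpanningForest (hc : connP V A) : connP V (maxSpanningForest A ω) :=
  ⟨fun g hg => hc.1 g (maxSpanningForest_subset hg), fun u hu v hv =>
    (hc.2 u hu v hv).lift fun _ hg =>
      (reachP_maxSpanningForest_filter_le hg).mono (filter_subset _ _)⟩

/-- A cycle through an edge of the forest would have a lightest edge, whose endpoints are then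
joined by heavier edges. -/
theorem isAcyclicP_maxSpanningForest (hω : Set.InjOn ω A) :
    IsAcyclicP (maxSpanningForest A ω) := by
  set F := maxSpanningForest A ω
  intro e heF hcyc
  obtain ⟨S, hSF, hSr, hSmin⟩ := exists_minimal_connector hcyc
  have heS : e ∉ S := fun h => (mem_erase.1 (hSF h)).1 rfl
  have hSA : insert e S ⊆ A := insert_subset (maxSpanningForest_subset heF)
    fun g hg => maxSpanningForest_subset (mem_of_mem_erase (hSF hg))
  obtain ⟨m, hm, hmin⟩ := exists_min_image (insert e S) ω (insert_nonempty e S)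
  have hmF : m ∈ F := by
    rcases mem_insert.1 hm with rfl | hmS
    · exact heF
    · exact mem_of_mem_erase (hSF hmS)
  have hcycm : reachP ((insert e S).erase m) m.1 m.2 := by
    rcases mem_insert.1 hm with rfl | hmS
    · rwa [erase_insert heS]
    · rw [erase_insert_of_ne (by rintro rfl; exact heS hmS)]
      exact reachP.insert_erase_of_not_erase hSr (hSmin m hmS)
  refine (mem_filter.1 hmF).2 (hcycm.mono fun g hg => ?_)
  obtain ⟨hgm, hg⟩ := mem_erase.1 hg
  exact mem_filter.2 ⟨hSA hg, lt_of_le_of_ne (hmin g hg)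
    fun h => hgm (hω (hSA hm) (hSA hg) h).symm⟩

theorem isTreeOn_maxSpanningForest (hc : connP V A) (hV : V.Nonempty) (hω : Set.InjOn ω A) :
    IsTreeOn V (maxSpanningForest A ω) :=
  ⟨hc.maxSpanningForest,
    (isAcyclicP_maxSpanningForest hω).card_add_one hc.maxSpanningForest hV⟩

theorem extActiveP_maxSpanningForest {f : PEdge} (hf : f ∈ A)
    (hfF : f ∉ maxSpanningForest A ω) : extActiveP (maxSpanningForest A ω) ω f := by
  have hr := reachP_maxSpanningForest_filter_lt
    (fun _ hg _ => reachP_maxSpanningForest_filter_le hg) hf hfF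
  refine ⟨hfF, hr.mono (filter_subset _ _), fun e' _ hess => ?_⟩
  by_contra hle
  exact hess (hr.mono fun g hg => mem_erase.2
    ⟨fun h => hle (h ▸ (mem_filter.1 hg).2), (mem_filter.1 hg).1⟩)

end maxSpanningForest

theorem exists_isTreeOn_subset {V : Finset ℕ} {E : Finset PEdge} (hc : connP V E)
    (hV : V.Nonempty) : ∃ T ⊆ E, IsTreeOn V T :=
  ⟨_, maxSpanningForest_subset,
    isTreeOn_maxSpanningForest (ω := fun e => (Nat.pairEquiv e : ℝ)) hc hV
      fun _ _ _ _ h => Nat.pairEquiv.injective (Nat.cast_injective h)⟩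

theorem connP.card_le {V : Finset ℕ} {E : Finset PEdge} (hc : connP V E) (hV : V.Nonempty) :
    V.card ≤ E.card + 1 := by
  obtain ⟨T, hTE, hT⟩ := exists_isTreeOn_subset hc hV
  have := card_le_card hTE
  have := hT.2
  omega

theorem IsTreeOn.isAcyclicP {V : Finset ℕ} {T : Finset PEdge} (hT : IsTreeOn V T) :
    IsAcyclicP T := by
  intro e he hd
  have hV : V.Nonempty := card_pos.1 (by have := hT.2; omega)
  have := (hT.1.erase hd).card_le hV
  have := card_erase_add_one he
  have := hT.2
  omega

/-- Both sides consist of the edges of `A` whose endpoints are not joined by heavier edges. -/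
theorem IsTreeOn.eq_maxSpanningForest {V : Finset ℕ} {A T : Finset PEdge} {ω : PEdge → ℝ}
    (hT : IsTreeOn V T) (hTA : T ⊆ A) (hact : ∀ f ∈ A, f ∉ T → extActiveP T ω f) :
    T = maxSpanningForest A ω := by
  have hheavy : ∀ f ∈ A, f ∉ T → reachP (T.filter fun x => ω f < ω x) f.1 f.2 := by
    intro f hf hfT
    obtain ⟨-, hr, hess⟩ := hact f hf hfT
    obtain ⟨S, hST, hSr, hSmin⟩ := exists_minimal_connector hr
    exact hSr.mono fun g hg => mem_filter.2
      ⟨hST hg, hess g (hST hg) (hT.isAcyclicP.not_reachP_erase_of_minimal hST hSr hSmin hg)⟩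
  ext e
  simp only [maxSpanningForest, mem_filter]
  constructor
  · refine fun heT => ⟨hTA heT, fun h => hT.isAcyclicP e heT (h.lift fun g hg => ?_)⟩
    obtain ⟨hgA, hlt⟩ := mem_filter.1 hg
    by_cases hgT : g ∈ T
    · exact reachP.of_mem (mem_erase.2 ⟨by rintro rfl; exact lt_irrefl _ hlt, hgT⟩)
    · exact (hheavy g hgA hgT).mono fun x hx => mem_erase.2
        ⟨by rintro rfl; exact lt_asymm hlt (mem_filter.1 hx).2, (mem_filter.1 hx).1⟩
  · rintro ⟨heA, hnot⟩
    by_contra heT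
    exact hnot ((hheavy e heA heT).mono (filter_subset_filter _ hTA))

/-- `T_G(1, y)` as a sum over the connected spanning subgraphs of `G`. -/
def connSum (V : Finset ℕ) (E : Finset PEdge) (y : ℤ) : ℤ :=
  ∑ A ∈ E.powerset with connP V A, (y - 1) ^ (A.card + 1 - V.card)

theorem filter_maxSpanningForest_eq {V : Finset ℕ} {E T : Finset PEdge} {ω : PEdge → ℝ}
    (hEV : ∀ g ∈ E, g.1 ∈ V ∧ g.2 ∈ V) (hTE : T ⊆ E) (hT : IsTreeOn V T) :
    {A ∈ {A ∈ E.powerset | connP V A} | maxSpanningForest A ω = T}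
      = (E.filter (extActiveP T ω)).powerset.image (T ∪ ·) := by
  ext A
  simp only [mem_filter, mem_powerset, mem_image]
  constructor
  · rintro ⟨⟨hAE, hA⟩, rfl⟩
    refine ⟨A \ maxSpanningForest A ω, fun f hf => ?_,
      union_sdiff_of_subset maxSpanningForest_subset⟩
    obtain ⟨hfA, hfF⟩ := mem_sdiff.1 hf
    exact mem_filter.2 ⟨hAE hfA, extActiveP_maxSpanningForest hfA hfF⟩
  · rintro ⟨S, hS, rfl⟩
    have hSE : S ⊆ E := hS.trans (filter_subset _ _)
    have hc : connP V (T ∪ S) := ⟨fun g hg => hEV g (union_subset hTE hSE hg),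
      fun u hu v hv => (hT.1.2 u hu v hv).mono subset_union_left⟩
    refine ⟨⟨union_subset hTE hSE, hc⟩, (hT.eq_maxSpanningForest subset_union_left ?_).symm⟩
    intro f hf hfT
    exact (mem_filter.1 (hS ((mem_union.1 hf).resolve_left hfT))).2

theorem sum_filter_maxSpanningForest_eq {V : Finset ℕ} {E T : Finset PEdge} {ω : PEdge → ℝ}
    (y : ℤ) (hEV : ∀ g ∈ E, g.1 ∈ V ∧ g.2 ∈ V) (hTE : T ⊆ E) (hT : IsTreeOn V T) :
    ∑ A ∈ {A ∈ {A ∈ E.powerset | connP V A} | maxSpanningForest A ω = T},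
        (y - 1) ^ (A.card + 1 - V.card) = y ^ eaP E T ω := by
  have hdisj : ∀ S ∈ (E.filter (extActiveP T ω)).powerset, Disjoint T S := fun S hS =>
    disjoint_right.2 fun f hf => (mem_filter.1 (mem_powerset.1 hS hf)).2.1
  have hinj : Set.InjOn (T ∪ ·) (E.filter (extActiveP T ω)).powerset := by
    intro S₁ h₁ S₂ h₂ h
    rw [← union_sdiff_cancel_left (hdisj S₁ h₁),
      ← union_sdiff_cancel_left (hdisj S₂ h₂)]
    exact congrArg (· \ T) h
  have hpow : ∑ S ∈ (E.filter (extActiveP T ω)).powerset, (y - 1) ^ S.card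
      = y ^ (E.filter (extActiveP T ω)).card := by
    simpa using sum_pow_mul_eq_add_pow (y - 1) 1 (E.filter (extActiveP T ω))
  rw [filter_maxSpanningForest_eq hEV hTE hT, sum_image hinj, eaP, ← hpow]
  refine sum_congr rfl fun S hS => ?_
  rw [card_union_of_disjoint (hdisj S hS), Nat.add_right_comm, hT.2, Nat.add_sub_cancel_left]

theorem TcP_eq_connSum {V : Finset ℕ} {E : Finset PEdge} {ω : PEdge → ℝ} (y : ℤ)
    (hEV : ∀ g ∈ E, g.1 ∈ V ∧ g.2 ∈ V) (hω : Set.InjOn ω E) (hV : V.Nonempty) :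
    TcP V E ω y = connSum V E y := by
  unfold TcP connSum
  split_ifs with hc
  · have hmaps : ∀ A ∈ E.powerset.filter (connP V),
        maxSpanningForest A ω ∈ E.powerset.filter (IsTreeOn V) := by
      intro A hA
      obtain ⟨hAE, hAc⟩ := mem_filter.1 hA
      exact mem_filter.2 ⟨mem_powerset.2 (maxSpanningForest_subset.trans (mem_powerset.1 hAE)),
        isTreeOn_maxSpanningForest hAc hV (hω.mono (mem_powerset.1 hAE))⟩
    rw [← sum_fiberwise_of_maps_to hmaps]
    refine (sum_congr rfl fun T hT => ?_).symm
    obtain ⟨hTE, hT⟩ := mem_filter.1 hT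
    exact sum_filter_maxSpanningForest_eq y hEV (mem_powerset.1 hTE) hT
  · refine (sum_eq_zero fun A hA => ?_).symm
    obtain ⟨hAE, hAc⟩ := mem_filter.1 hA
    exact absurd ⟨hEV, fun u hu v hv => (hAc.2 u hu v hv).mono (mem_powerset.1 hAE)⟩ hc

theorem connP_image_of_injective {V : Finset ℕ} {A : Finset PEdge} {σ : ℕ → ℕ}
    (hσ : σ.Injective) : connP (V.image σ) (A.image (Prod.map σ σ)) ↔ connP V A := by
  have hinv : ∀ x, Function.invFun σ (σ x) = x := Function.leftInverse_invFun hσ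
  constructor
  · rintro ⟨hAV, hr⟩
    refine ⟨fun g hg => ?_, fun u hu v hv => ?_⟩
    · have := hAV _ (mem_image_of_mem (Prod.map σ σ) hg)
      simpa [hσ.eq_iff] using this
    · have hedge : ∀ g ∈ A.image (Prod.map σ σ),
          reachP A (Function.invFun σ g.1) (Function.invFun σ g.2) := by
        intro g hg
        obtain ⟨g, hgA, rfl⟩ := mem_image.1 hg
        simpa [hinv] using reachP.of_mem hgA
      simpa [hinv] using
        (hr _ (mem_image_of_mem σ hu) _ (mem_image_of_mem σ hv)).map _ hedge
  · rintro ⟨hAV, hr⟩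
    refine ⟨fun g hg => ?_, fun u hu v hv => ?_⟩
    · obtain ⟨g, hgA, rfl⟩ := mem_image.1 hg
      exact ⟨mem_image_of_mem σ (hAV g hgA).1, mem_image_of_mem σ (hAV g hgA).2⟩
    · obtain ⟨u, huV, rfl⟩ := mem_image.1 hu
      obtain ⟨v, hvV, rfl⟩ := mem_image.1 hv
      exact (hr u huV v hvV).map σ fun g hg =>
        reachP.of_mem (e := (σ g.1, σ g.2)) (mem_image_of_mem (Prod.map σ σ) hg)

theorem connSum_image_of_injective (V : Finset ℕ) (E : Finset PEdge) {σ : ℕ → ℕ}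
    (hσ : σ.Injective) (y : ℤ) :
    connSum (V.image σ) (E.image (Prod.map σ σ)) y = connSum V E y := by
  have hσσ : (Prod.map σ σ).Injective := hσ.prodMap hσ
  unfold connSum
  rw [powerset_image, filter_image, sum_image (image_injective hσσ).injOn]
  simp only [connP_image_of_injective hσ, card_image_of_injective _ hσσ,
    card_image_of_injective _ hσ]

def contractMap (e : PEdge) (x : ℕ) : ℕ := if x = e.2 then e.1 else x

section contraction

variable {V : Finset ℕ} {e : PEdge}

theorem contractMap_mem_erase (h1 : e.1 ∈ V) (h2 : e.2 ∈ V) (hne : e.1 ≠ e.2) {x : ℕ} :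
    contractMap e x ∈ V.erase e.2 ↔ x ∈ V := by
  unfold contractMap
  split_ifs with hx
  · exact ⟨fun _ => hx ▸ h2, fun _ => mem_erase.2 ⟨hne, h1⟩⟩
  · simp [hx]

theorem reachP_insert_contractMap (A : Finset PEdge) (x : ℕ) :
    reachP (insert e A) x (contractMap e x) := by
  unfold contractMap
  split_ifs with hx
  · exact (hx ▸ reachP.of_mem (mem_insert_self e A)).symm
  · exact reachP.refl _ _

theorem connP_insert_iff_contract {A : Finset PEdge} (h1 : e.1 ∈ V) (h2 : e.2 ∈ V)
    (hne : e.1 ≠ e.2) :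
    connP V (insert e A) ↔
      connP (V.erase e.2) (A.image (Prod.map (contractMap e) (contractMap e))) := by
  set c := contractMap e
  have hc1 : c e.1 = e.1 := if_neg hne
  have hc2 : c e.2 = e.1 := if_pos rfl
  have hfix : ∀ x ∈ V.erase e.2, c x = x := fun x hx => if_neg (mem_erase.1 hx).1
  have hmem := fun x => contractMap_mem_erase (x := x) h1 h2 hne
  have hto := reachP_insert_contractMap (e := e) A
  constructor
  · rintro ⟨hAV, hr⟩
    refine ⟨fun g hg => ?_, fun u hu v hv => ?_⟩
    · obtain ⟨g, hgA, rfl⟩ := mem_image.1 hg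
      have := hAV g (mem_insert_of_mem hgA)
      exact ⟨(hmem _).2 this.1, (hmem _).2 this.2⟩
    · have hedge : ∀ g ∈ insert e A, reachP (A.image (Prod.map c c)) (c g.1) (c g.2) := by
        intro g hg
        rcases mem_insert.1 hg with rfl | hgA
        · rw [hc1, hc2]
          exact reachP.refl _ _
        · exact reachP.of_mem (e := (c g.1, c g.2)) (mem_image_of_mem _ hgA)
      have := (hr u (mem_of_mem_erase hu) v (mem_of_mem_erase hv)).map c hedge
      rwa [hfix u hu, hfix v hv] at this
  · rintro ⟨hAV, hr⟩
    refine ⟨fun g hg => ?_, fun u hu v hv => ?_⟩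
    · rcases mem_insert.1 hg with rfl | hg
      · exact ⟨h1, h2⟩
      · have := hAV _ (mem_image_of_mem (Prod.map c c) hg)
        exact ⟨(hmem _).1 this.1, (hmem _).1 this.2⟩
    · refine ((hto u).trans ?_).trans (hto v).symm
      refine (hr _ ((hmem _).2 hu) _ ((hmem _).2 hv)).lift fun g hg => ?_
      obtain ⟨g, hgA, rfl⟩ := mem_image.1 hg
      exact ((hto g.1).symm.trans (reachP.of_mem (mem_insert_of_mem hgA))).trans (hto g.2)

/-- `hinj` says that contracting `e` creates no parallel edges. -/
theorem connSum_eq_erase_add_contract {E : Finset PEdge} (he : e ∈ E) (h1 : e.1 ∈ V)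
    (h2 : e.2 ∈ V) (hne : e.1 ≠ e.2)
    (hinj : Set.InjOn (Prod.map (contractMap e) (contractMap e)) (E.erase e)) (y : ℤ) :
    connSum V E y = connSum V (E.erase e) y + connSum (V.erase e.2)
      ((E.erase e).image (Prod.map (contractMap e) (contractMap e))) y := by
  unfold connSum
  simp only [sum_filter]
  conv_lhs => rw [← insert_erase he, sum_powerset_insert (notMem_erase e E)]
  rw [powerset_image, sum_image (image_injOn_powerset_of_injOn hinj)]
  congr 1
  refine sum_congr rfl fun A hA => ?_
  have hAE := mem_powerset.1 hA
  rw [connP_insert_iff_contract h1 h2 hne,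
    card_insert_of_notMem fun h => (mem_erase.1 (hAE h)).1 rfl,
    card_image_of_injOn (hinj.mono hAE), card_erase_of_mem h2]
  have : 0 < V.card := card_pos.2 ⟨_, h2⟩
  congr 2
  omega

end contraction

theorem mem_ctE2 {A B : Finset ℕ} {e : PEdge} :
    e ∈ ctE2 A B ↔ e.1 ∈ A ∧ e.2 ∈ B ∧ e.1 < e.2 := by
  simp [ctE2, and_assoc]

theorem omegaLex_injOn {N : ℕ} {E : Finset PEdge} (hE : ∀ g ∈ E, g.2 ≤ N) :
    Set.InjOn (omegaLex N) E := by
  intro a ha b hb hab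
  have h : a.1 * (N + 1) + a.2 = b.1 * (N + 1) + b.2 := by
    unfold omegaLex at hab
    exact_mod_cast hab
  have h2 : a.2 = b.2 := by
    simpa [Nat.mul_add_mod_of_lt (Nat.lt_succ_of_le (hE a ha)),
      Nat.mul_add_mod_of_lt (Nat.lt_succ_of_le (hE b hb))] using congrArg (· % (N + 1)) h
  exact Prod.ext (Nat.eq_of_mul_eq_mul_right N.succ_pos
    (by omega : a.1 * (N + 1) = b.1 * (N + 1))) h2

theorem TcP_omegaLex_eq_connSum {V : Finset ℕ} {E : Finset PEdge} {N : ℕ} (y : ℤ)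
    (hEV : ∀ g ∈ E, g.1 ∈ V ∧ g.2 ∈ V) (hVN : ∀ x ∈ V, x ≤ N) (hV : V.Nonempty) :
    TcP V E (omegaLex N) y = connSum V E y :=
  TcP_eq_connSum y hEV (omegaLex_injOn fun g hg => hVN _ (hEV g hg).2) hV

theorem image_swap_of_mem {V : Finset ℕ} {a b : ℕ} (ha : a ∈ V) (hb : b ∈ V) :
    V.image (Equiv.swap a b) = V := by
  rw [show (Equiv.swap a b : ℕ → ℕ) = (Equiv.swap a b).toEmbedding from rfl, ← map_eq_image]
  ext x
  simp only [mem_map_equiv, Equiv.symm_swap, Equiv.swap_apply_def]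
  split_ifs <;> simp_all

section CompleteTiered

variable {U1 U2 : Finset ℕ} {r : ℕ}

theorem image_swap_ctE2 (hr : r ∉ U1 ∪ U2) (hr1 : r + 1 ∉ U1 ∪ U2) :
    (ctE2 (U1 ∪ {r + 1}) (U2 ∪ {r})).image
        (Prod.map (Equiv.swap r (r + 1)) (Equiv.swap r (r + 1)))
      = (ctE2 (U1 ∪ {r}) (U2 ∪ {r + 1})).erase (r, r + 1) := by
  rw [show Prod.map (Equiv.swap r (r + 1) : ℕ → ℕ) (Equiv.swap r (r + 1))
      = ((Equiv.swap r (r + 1)).prodCongr (Equiv.swap r (r + 1))).toEmbedding from rfl,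
    ← map_eq_image]
  ext ⟨a, b⟩
  simp only [mem_map_equiv, Equiv.prodCongr_symm, Equiv.prodCongr_apply, Equiv.symm_swap,
    Prod.map, mem_ctE2, mem_erase, mem_union, mem_singleton, Equiv.swap_apply_def]
  split_ifs <;> grind

theorem injOn_contractMap_ctE2 (hr : r ∉ U1 ∪ U2) (hr1 : r + 1 ∉ U1 ∪ U2) :
    Set.InjOn (Prod.map (contractMap (r, r + 1)) (contractMap (r, r + 1)))
      ((ctE2 (U1 ∪ {r}) (U2 ∪ {r + 1})).erase (r, r + 1)) := by
  rintro ⟨a, b⟩ h ⟨a', b'⟩ h' heq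
  simp only [mem_coe, Prod.map, contractMap, mem_ctE2, mem_erase, mem_union, mem_singleton,
    Prod.mk.injEq] at h h' heq ⊢
  split_ifs at heq <;> grind

theorem image_contractMap_ctE2 (hr : r ∉ U1 ∪ U2) (hr1 : r + 1 ∉ U1 ∪ U2) :
    ((ctE2 (U1 ∪ {r}) (U2 ∪ {r + 1})).erase (r, r + 1)).image
        (Prod.map (contractMap (r, r + 1)) (contractMap (r, r + 1)))
      = ctE2 U1 {r} ∪ ctE2 U1 U2 ∪ ctE2 {r} U2 := by
  ext ⟨a, b⟩
  simp only [mem_image, Prod.exists, Prod.map, contractMap, mem_ctE2, mem_erase, mem_union,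
    mem_singleton, ne_eq, Prod.mk.injEq]
  constructor
  · rintro ⟨a', b', h, rfl, rfl⟩
    split_ifs <;> grind
  · intro h
    refine ⟨a, if b = r then r + 1 else b, ?_⟩
    split_ifs <;> grind

theorem connSum_ctE2_eq_add {V : Finset ℕ} (hrV : r ∈ V) (hr1V : r + 1 ∈ V)
    (hr : r ∉ U1 ∪ U2) (hr1 : r + 1 ∉ U1 ∪ U2) (y : ℤ) :
    connSum V (ctE2 (U1 ∪ {r}) (U2 ∪ {r + 1})) y
      = connSum V (ctE2 (U1 ∪ {r + 1}) (U2 ∪ {r})) y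
        + connSum (V.erase (r + 1)) (ctE2 U1 {r} ∪ ctE2 U1 U2 ∪ ctE2 {r} U2) y := by
  rw [connSum_eq_erase_add_contract (e := (r, r + 1)) (mem_ctE2.2 (by simp)) hrV hr1V (by simp)
    (injOn_contractMap_ctE2 hr hr1), image_contractMap_ctE2 hr hr1, ← image_swap_ctE2 hr hr1]
  conv_rhs => rw [← connSum_image_of_injective V _ (Equiv.swap r (r + 1)).injective y,
    image_swap_of_mem hrV hr1V]

end CompleteTiered

theorem stmt16_general (n r : ℕ) (hr : r ∈ Finset.Icc 1 (n + 1)) (U1 U2 : Finset ℕ)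
    (hcover : U1 ∪ U2 = Finset.Icc 1 (n + 2) \ {r, r + 1}) (y : ℤ) :
    TcP (U1 ∪ {r} ∪ U2) (ctE2 U1 {r} ∪ ctE2 U1 U2 ∪ ctE2 {r} U2) (omegaLex (n + 2)) y
      = TcP (Finset.Icc 1 (n + 2)) (ctE2 (U1 ∪ {r}) (U2 ∪ {r + 1})) (omegaLex (n + 2)) y
        - TcP (Finset.Icc 1 (n + 2)) (ctE2 (U1 ∪ {r + 1}) (U2 ∪ {r})) (omegaLex (n + 2)) y := by
  have hU : ∀ x, x ∈ U1 ∨ x ∈ U2 ↔ (1 ≤ x ∧ x ≤ n + 2) ∧ ¬(x = r ∨ x = r + 1) :=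
    by simpa using Finset.ext_iff.1 hcover
  rw [mem_Icc] at hr
  have hrV : r ∈ Icc 1 (n + 2) := mem_Icc.2 (by omega)
  have hr1V : r + 1 ∈ Icc 1 (n + 2) := mem_Icc.2 (by omega)
  have hle : ∀ x ∈ Icc 1 (n + 2), x ≤ n + 2 := fun x hx => (mem_Icc.1 hx).2
  have hVr : (Icc 1 (n + 2)).erase (r + 1) = U1 ∪ {r} ∪ U2 := by
    ext x
    simp only [mem_erase, mem_Icc, mem_union, mem_singleton]
    grind
  rw [← hVr, TcP_omegaLex_eq_connSum y (fun g hg => ?_) (fun x hx => hle x (mem_of_mem_erase hx))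
      ⟨r, mem_erase.2 ⟨by omega, hrV⟩⟩,
    TcP_omegaLex_eq_connSum y (fun g hg => ?_) hle ⟨r, hrV⟩,
    TcP_omegaLex_eq_connSum y (fun g hg => ?_) hle ⟨r, hrV⟩,
    connSum_ctE2_eq_add hrV hr1V (by simp [hU]) (by simp [hU])]
  · ring
  -- the `?_` goals: endpoints of edges lie in the vertex sets
  all_goals simp only [mem_erase, mem_union, mem_ctE2, mem_singleton, mem_Icc] at hg ⊢; grind

/-- for `r ∈ [n+1]` and a partition `{U1,U2}` of `[n+2] \ {r,r+1}`,
`T^c_{CT(U1,{r},U2)}(y) = T^c_{CT(U1∪{r},U2∪{r+1})}(y) − T^c_{CT(U1∪{r+1},U2∪{r})}(y)`,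
where `T^c_G(y) = T_G(1,y)` if `G` is connected and `0` otherwise. -/
theorem stmt16 (n r : ℕ) (hr : r ∈ Finset.Icc 1 (n + 1)) (U1 U2 : Finset ℕ)
    (h1 : U1.Nonempty) (h2 : U2.Nonempty) (hdisj : Disjoint U1 U2)
    (hcover : U1 ∪ U2 = Finset.Icc 1 (n + 2) \ {r, r + 1}) (y : ℤ) :
    TcP (U1 ∪ {r} ∪ U2) (ctE2 U1 {r} ∪ ctE2 U1 U2 ∪ ctE2 {r} U2) (omegaLex (n + 2)) y
      = TcP (Finset.Icc 1 (n + 2)) (ctE2 (U1 ∪ {r}) (U2 ∪ {r + 1})) (omegaLex (n + 2)) y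
        - TcP (Finset.Icc 1 (n + 2)) (ctE2 (U1 ∪ {r + 1}) (U2 ∪ {r})) (omegaLex (n + 2)) y :=
  stmt16_general n r hr U1 U2 hcover y

end
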